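/- Fix n ≥ 2, 2 ≤ r ≤ n, 1 ≤ K < n, p ∈ (0,1). The probability that the subgraph of H∩G(n;K,p) restricted to vertices {1,...,r} is connected is at most r^{r−2}·(p·λ_n(K))^{r−1}. -/

import Mathlib

/-
A connected graph on the first `r` vertices contains a spanning tree, and there are at most
`r ^ (r - 2)` spanning trees (Cayley's bound, through the Prüfer code), so it suffices to bound the
probability that a fixed tree survives. Its `r - 1` Erdős–Rényi edges are independent, which
gives `p ^ (r - 1)`. For the pairings, remove a leaf `v` with parent `w`: the set `γ v` is
independent of the other edges of the tree, and these only ask that `γ w` contain certain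
vertices other than `v`, which cannot raise the chance `K / (n - 1)` that `v ∈ γ w`. So the pair
`v, w` costs at most `1 - (1 - K / (n - 1)) ^ 2 = λ_n(K)`, and induction on the number of edges
concludes.
-/

open scoped Classical

/-- The set of admissible pairing assignments: each node `i` is assigned a
`K`-element subset of the other nodes. -/
noncomputable def validGammas (n K : ℕ) : Finset (Fin n → Finset (Fin n)) :=
  Finset.univ.filter (fun γ => ∀ i, γ i ∈ Finset.powersetCard K (Finset.univ.erase i))

/-- Probability of an event in `H ∩ G(n; K, p)`. -/
noncomputable def probHG (n K : ℕ) (p : ℝ)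
    (E : (Fin n → Finset (Fin n)) → (Sym2 (Fin n) → Bool) → Prop) : ℝ :=
  (∑ γ ∈ validGammas n K, ∑ β : Sym2 (Fin n) → Bool,
      (∏ e : Sym2 (Fin n), if β e then p else 1 - p) * (if E γ β then 1 else 0))
    / ((validGammas n K).card : ℝ)

/-- Adjacency in `H ∩ G(n; K, p)`. -/
def adjHG (n : ℕ) (γ : Fin n → Finset (Fin n)) (β : Sym2 (Fin n) → Bool)
    (i j : Fin n) : Prop :=
  (j ∈ γ i ∨ i ∈ γ j) ∧ β s(i, j) = true

open Finset Function

theorem exists_forall_apply_ne_of_forall_exists_iterate_notMem {α : Type*} {f : α → α}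
    {S : Finset α} (hS : S.Nonempty) (hesc : ∀ u ∈ S, ∃ k, f^[k] u ∉ S) :
    ∃ v ∈ S, ∀ u ∈ S, f u ≠ v := by
  -- a vertex of `S` whose orbit stays longest in `S` has no preimage in `S`
  let exit (u : α) : ℕ := if hu : u ∈ S then Nat.find (hesc u hu) else 0
  obtain ⟨v, hv, hmax⟩ := exists_max_image S exit hS
  refine ⟨v, hv, fun u hu hfu => ?_⟩
  have hexit_u : f^[exit u] u ∉ S := by simpa [exit, hu] using Nat.find_spec (hesc u hu)
  have hpos : exit u ≠ 0 := fun h => by simp [h, hu] at hexit_u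
  have hexit_v : f^[exit u - 1] v ∉ S := by
    rwa [← hfu, ← iterate_succ_apply, Nat.succ_eq_add_one, Nat.sub_add_cancel (by omega)]
  have : exit v ≤ exit u - 1 := by simpa [exit, hv] using Nat.find_min' (hesc v hv) hexit_v
  have := hmax u hu
  omega

theorem apply_ne_self_of_iterate_eq {α : Type*} {f : α → α} {root : α}
    (hreach : ∀ v, ∃ k, f^[k] v = root) {v : α} (hv : v ≠ root) : f v ≠ v := fun hfv => by
  obtain ⟨k, hk⟩ := hreach v
  exact hv (by rwa [iterate_fixed hfv] at hk)

section PiFinset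

variable {ι β : Type*} [Fintype ι] [DecidableEq ι] (D : ι → Finset β) (i : ι)

theorem update_mem_piFinset {γ : ι → β} (hγ : γ ∈ Fintype.piFinset D) {x : β}
    (hx : x ∈ D i) : update γ i x ∈ Fintype.piFinset D := by
  rw [Fintype.mem_piFinset] at hγ ⊢
  intro j
  rcases eq_or_ne j i with rfl | hj
  · simpa using hx
  · simpa [update_of_ne hj] using hγ j

/-- Resampling coordinate `i`: `(γ, x) ↦ (update γ i x, γ i)` is an involution of
`piFinset D ×ˢ D i` carrying `R (update γ i x)` to `R γ`. -/
theorem card_filter_piFinset_mul_card (R : (ι → β) → Prop) [DecidablePred R] :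
    #{γ ∈ Fintype.piFinset D | R γ} * #(D i)
      = ∑ γ ∈ Fintype.piFinset D, #{x ∈ D i | R (update γ i x)} := by
  simp_rw [← card_product, card_filter, ← sum_product']
  rw [← card_filter]
  let τ : (ι → β) × β → (ι → β) × β := fun q => (update q.1 i q.2, q.1 i)
  have hτ : ∀ q, τ (τ q) = q := fun q => by simp [τ]
  refine card_nbij' τ τ ?_ ?_ (fun q _ => hτ q) (fun q _ => hτ q)
  · rintro ⟨γ, x⟩ hq
    obtain ⟨⟨hγ, hR⟩, hx⟩ : (γ ∈ Fintype.piFinset D ∧ R γ) ∧ x ∈ D i := by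
      simpa using hq
    simp only [coe_filter, mem_product]
    exact ⟨⟨update_mem_piFinset D i hγ hx, Fintype.mem_piFinset.1 hγ i⟩,
      by simpa [τ] using hR⟩
  · rintro ⟨γ, x⟩ hq
    obtain ⟨⟨hγ, hx⟩, hR⟩ :
        (γ ∈ Fintype.piFinset D ∧ x ∈ D i) ∧ R (update γ i x) := by simpa using hq
    simp only [coe_product, coe_filter, Set.mem_prod]
    exact ⟨⟨update_mem_piFinset D i hγ hx, hR⟩, Fintype.mem_piFinset.1 hγ i⟩

theorem card_mul_card_filter_piFinset_and_apply {P : (ι → β) → Prop} [DecidablePred P]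
    (hP : ∀ γ x, P (update γ i x) ↔ P γ) (Q : β → Prop) [DecidablePred Q] :
    #(D i) * #{γ ∈ Fintype.piFinset D | P γ ∧ Q (γ i)}
      = #{x ∈ D i | Q x} * #{γ ∈ Fintype.piFinset D | P γ} := by
  rw [mul_comm, card_filter_piFinset_mul_card, mul_comm, card_eq_sum_ones, sum_filter, sum_mul]
  refine sum_congr rfl fun γ _ => ?_
  by_cases hγ : P γ <;> simp [hP, hγ]

theorem card_filter_piFinset_le_of_forall_update {R S : (ι → β) → Prop} [DecidablePred R]
    [DecidablePred S] {a b : ℕ} (hD : (D i).Nonempty)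
    (h : ∀ γ ∈ Fintype.piFinset D,
      a * #{x ∈ D i | R (update γ i x)} ≤ b * #{x ∈ D i | S (update γ i x)}) :
    a * #{γ ∈ Fintype.piFinset D | R γ} ≤ b * #{γ ∈ Fintype.piFinset D | S γ} := by
  refine Nat.le_of_mul_le_mul_right ?_ hD.card_pos
  simp_rw [mul_assoc, card_filter_piFinset_mul_card, mul_sum]
  exact sum_le_sum h

end PiFinset

section Hypergeometric

variable {α : Type*} [DecidableEq α] {U : Finset α} {v : α}

theorem card_filter_and_mem_le_card_filter_and_mem {P : Finset α → Prop} [DecidablePred P]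
    (hP : Monotone P) (hPv : ∀ y, P (y.erase v) ↔ P y) (K : ℕ) (hv : v ∈ U) {t : α}
    (ht : t ∈ U) :
    #{y ∈ powersetCard K U | P y ∧ v ∈ y} ≤ #{y ∈ powersetCard K U | P y ∧ t ∈ y} := by
  let σ := Equiv.swap v t
  have hσU : ∀ z ∈ U, σ z ∈ U := fun z hz => by
    rcases eq_or_ne z v with rfl | hzv
    · simpa [σ] using ht
    rcases eq_or_ne z t with rfl | hzt
    · simpa [σ] using hv
    · simpa [σ, Equiv.swap_apply_of_ne_of_ne hzv hzt] using hz
  refine card_le_card_of_injOn (fun y => y.map σ.toEmbedding) (fun y hy => ?_)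
    (fun y _ y' _ h => map_injective σ.toEmbedding h)
  simp only [coe_filter, mem_powersetCard, Set.mem_ofPred_eq] at hy ⊢
  obtain ⟨⟨hyU, hyK⟩, hPy, hvy⟩ := hy
  have herase : y.erase v ⊆ y.map σ.toEmbedding := fun z hz => by
    rw [mem_map_equiv]
    rcases eq_or_ne z t with rfl | hzt
    · simpa [σ] using hvy
    · rw [Equiv.symm_swap, Equiv.swap_apply_of_ne_of_ne (ne_of_mem_erase hz) hzt]
      exact mem_of_mem_erase hz
  refine ⟨⟨fun z hz => ?_, by simpa using hyK⟩, hP herase ((hPv y).2 hPy), ?_⟩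
  · obtain ⟨z', hz', rfl⟩ := mem_map.1 hz
    exact hσU z' (hyU hz')
  · simpa [mem_map_equiv, σ] using hvy

/-- Among `K`-subsets of `U` satisfying an up-closed condition that ignores `v`, at most the
fraction `K / #U` contain `v`: swapping `v` with any `t ∈ U` shows `v` is the least likely
element, and the elements of `U` are hit `K` times in total. -/
theorem card_mul_card_filter_and_mem_le {P : Finset α → Prop} [DecidablePred P] (hP : Monotone P)
    (hPv : ∀ y, P (y.erase v) ↔ P y) (K : ℕ) (hv : v ∈ U) :
    #U * #{y ∈ powersetCard K U | P y ∧ v ∈ y} ≤ K * #{y ∈ powersetCard K U | P y} := by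
  have hcount : ∑ t ∈ U, #{y ∈ powersetCard K U | P y ∧ t ∈ y}
      = K * #{y ∈ powersetCard K U | P y} := by
    have := sum_card_bipartiteAbove_eq_sum_card_bipartiteBelow (s := U)
      (t := {y ∈ powersetCard K U | P y}) (r := fun t y => t ∈ y)
    simp only [bipartiteAbove, bipartiteBelow, filter_filter] at this
    rw [this, mul_comm, ← smul_eq_mul, ← sum_const]
    refine sum_congr rfl fun y hy => ?_
    obtain ⟨⟨hyU, hyK⟩, -⟩ := by simpa only [mem_filter, mem_powersetCard] using hy
    rw [filter_mem_eq_inter, inter_eq_right.2 hyU, hyK]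
  calc #U * #{y ∈ powersetCard K U | P y ∧ v ∈ y}
      = ∑ _t ∈ U, #{y ∈ powersetCard K U | P y ∧ v ∈ y} := by rw [sum_const, smul_eq_mul]
    _ ≤ ∑ t ∈ U, #{y ∈ powersetCard K U | P y ∧ t ∈ y} :=
        sum_le_sum fun t ht => card_filter_and_mem_le_card_filter_and_mem hP hPv K hv ht
    _ = K * #{y ∈ powersetCard K U | P y} := hcount

end Hypergeometric

/-- `λ_N(K) = 1 - (1 - K/(N-1))²`, the probability that two given vertices are paired. -/
noncomputable def pairedProb (N K : ℕ) : ℝ :=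
  2 * (K : ℝ) / ((N : ℝ) - 1) - ((K : ℝ) / ((N : ℝ) - 1)) ^ 2

theorem pairedProb_nonneg {N K : ℕ} (hK : K < N) : 0 ≤ pairedProb N K := by
  have hKN : (K : ℝ) ≤ (N : ℝ) - 1 := by
    rw [le_sub_iff_add_le]; exact_mod_cast hK
  have hρ0 : 0 ≤ K / ((N : ℝ) - 1) := div_nonneg K.cast_nonneg (K.cast_nonneg.trans hKN)
  have hρ1 : K / ((N : ℝ) - 1) ≤ 1 := div_le_one_of_le₀ hKN (K.cast_nonneg.trans hKN)
  rw [pairedProb, mul_div_assoc]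
  nlinarith

/-- The inclusion–exclusion step of the leaf removal: `A` counts `P ∧ w ∈ γ v` and `B` counts
`P ∧ v ∈ γ w ∧ w ∉ γ v`, where `γ v` is independent of the rest, `w ∈ γ v` has frequency
`c / κ`, and `v ∈ γ w` has frequency `T / M` within `P`. -/
theorem add_le_pairedProb_mul {N K : ℕ} (hN : 1 < N) (hK : K < N) {κ c M T A B : ℝ}
    (hκ : 0 < κ) (hc : ((N : ℝ) - 1) * c ≤ K * κ) (hT : ((N : ℝ) - 1) * T ≤ K * M)
    (hTM : T ≤ M) (hA : κ * A = c * M) (hB : κ * B = (κ - c) * T) :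
    A + B ≤ pairedProb N K * M := by
  have hm : (0 : ℝ) < (N : ℝ) - 1 := by
    rw [sub_pos]; exact_mod_cast hN
  set ρ : ℝ := K / ((N : ℝ) - 1)
  have hcρ : c ≤ ρ * κ := by rw [div_mul_eq_mul_div, le_div_iff₀ hm]; linarith
  have hTρ : T ≤ ρ * M := by rw [div_mul_eq_mul_div, le_div_iff₀ hm]; linarith
  have hρ1 : ρ ≤ 1 := div_le_one_of_le₀ (by rw [le_sub_iff_add_le]; exact_mod_cast hK) hm.le
  have hlam : pairedProb N K = ρ + (1 - ρ) * ρ := by rw [pairedProb]; ring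
  refine le_of_mul_le_mul_left ?_ hκ
  calc κ * (A + B) = c * (M - T) + κ * T := by rw [mul_add, hA, hB]; ring
    _ ≤ ρ * κ * (M - T) + κ * T := by gcongr
    _ = κ * (ρ * M + (1 - ρ) * T) := by ring
    _ ≤ κ * (ρ * M + (1 - ρ) * (ρ * M)) := by gcongr
    _ = κ * (pairedProb N K * M) := by rw [hlam]; ring

section Pairing

variable {V : Type*}

/-- The edge relation of the random pairwise graph `H`, in which vertex `i` picks the set `γ i`. -/
def Paired (γ : V → Finset V) (a b : V) : Prop :=
  b ∈ γ a ∨ a ∈ γ b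

theorem Paired.mono {γ γ' : V → Finset V} (h : γ ≤ γ') {a b : V} :
    Paired γ a b → Paired γ' a b :=
  Or.imp (fun hb => h a hb) (fun ha => h b ha)

theorem paired_iff_of_erase_eq [DecidableEq V] {γ γ' : V → Finset V} {v : V}
    (h : ∀ i ≠ v, (γ i).erase v = (γ' i).erase v) {a b : V} (ha : a ≠ v) (hb : b ≠ v) :
    Paired γ a b ↔ Paired γ' a b := by
  have key : ∀ {x y}, x ≠ v → y ≠ v → (y ∈ γ x ↔ y ∈ γ' x) := fun {x y} hx hy => by
    simpa [hy] using congrArg (y ∈ ·) (h _ hx)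
  exact or_congr (key ha hb) (key hb ha)

variable [Fintype V] [DecidableEq V]

variable (V) in
/-- The sample space of `H(n; K)`, carrying the uniform measure. -/
def pairingConfigs (K : ℕ) : Finset (V → Finset V) :=
  Fintype.piFinset fun i => powersetCard K (univ.erase i)

variable {K : ℕ}

theorem card_univ_erase (i : V) : #(univ.erase i) = Fintype.card V - 1 := by
  rw [card_erase_of_mem (mem_univ i), card_univ]

theorem card_pairingConfigs_pos (hK : K < Fintype.card V) : 0 < #(pairingConfigs V K) :=
  (Fintype.piFinset_nonempty.2 fun i => powersetCard_nonempty.2 (by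
    rw [card_univ_erase]; omega)).card_pos

theorem card_mul_card_filter_and_mem_apply_le (hK : K < Fintype.card V)
    {P : (V → Finset V) → Prop} [DecidablePred P] (hP : Monotone P) {v w : V} (hvw : v ≠ w)
    (hPv : ∀ γ γ', (∀ i ≠ v, (γ i).erase v = (γ' i).erase v) → (P γ ↔ P γ')) :
    (Fintype.card V - 1) * #{γ ∈ pairingConfigs V K | P γ ∧ v ∈ γ w}
      ≤ K * #{γ ∈ pairingConfigs V K | P γ} := by
  refine card_filter_piFinset_le_of_forall_update _ w (powersetCard_nonempty.2 ?_) fun γ _ => ?_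
  · rw [card_univ_erase]; omega
  · simpa [card_univ_erase] using card_mul_card_filter_and_mem_le
      (P := fun y => P (update γ w y)) (fun y y' hy => hP (update_mono hy))
      (fun y => hPv _ _ fun i _ => by rcases eq_or_ne i w with rfl | hi <;> simp [*])
      K (mem_erase.2 ⟨hvw, mem_univ v⟩)

/-- Adding the pair `v, w` to an up-closed event `P` that ignores `v` costs a factor `λ`. -/
theorem card_filter_and_paired_le (hK : K < Fintype.card V) {P : (V → Finset V) → Prop}
    [DecidablePred P] (hP : Monotone P) {v w : V} (hvw : v ≠ w)
    (hPv : ∀ γ γ', (∀ i ≠ v, (γ i).erase v = (γ' i).erase v) → (P γ ↔ P γ')) :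
    (#{γ ∈ pairingConfigs V K | P γ ∧ Paired γ v w} : ℝ)
      ≤ pairedProb (Fintype.card V) K * #{γ ∈ pairingConfigs V K | P γ} := by
  set D : V → Finset (Finset V) := fun i => powersetCard K (univ.erase i)
  have hΓ : pairingConfigs V K = Fintype.piFinset D := rfl
  have hsplit : #{γ ∈ pairingConfigs V K | P γ ∧ Paired γ v w}
      = #{γ ∈ pairingConfigs V K | P γ ∧ w ∈ γ v}
        + #{γ ∈ pairingConfigs V K | (P γ ∧ v ∈ γ w) ∧ w ∉ γ v} := by
    rw [← card_filter_add_card_filter_not (fun γ => w ∈ γ v)]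
    congr 2 <;> ext γ <;> simp only [mem_filter] <;> unfold Paired <;> tauto
  have hP_v : ∀ γ x, P (update γ v x) ↔ P γ := fun γ x =>
    hPv _ _ fun i hi => by rw [update_of_ne hi]
  have hA := card_mul_card_filter_piFinset_and_apply D v hP_v (w ∈ ·)
  have hB := card_mul_card_filter_piFinset_and_apply D v (P := fun γ => P γ ∧ v ∈ γ w)
    (fun γ x => by simp [hP_v, update_of_ne hvw.symm]) (w ∉ ·)
  have hcompl := card_filter_add_card_filter_not (s := D v) (w ∈ ·)
  have hc := card_mul_card_filter_and_mem_le (P := fun _ => True) monotone_const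
    (fun _ => Iff.rfl) K (mem_erase.2 ⟨hvw.symm, mem_univ w⟩)
  simp only [true_and, filter_true, card_univ_erase] at hc
  have hT := card_mul_card_filter_and_mem_apply_le hK hP hvw hPv
  have hTM :
      #{γ ∈ pairingConfigs V K | P γ ∧ v ∈ γ w} ≤ #{γ ∈ pairingConfigs V K | P γ} :=
    card_le_card (monotone_filter_right _ fun _ _ => And.left)
  have hN : 1 < Fintype.card V := Fintype.one_lt_card_iff.2 ⟨v, w, hvw⟩
  have hcast : ((Fintype.card V - 1 : ℕ) : ℝ) = (Fintype.card V : ℝ) - 1 := by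
    rw [Nat.cast_sub hN.le, Nat.cast_one]
  rw [← hΓ] at hA hB
  rw [hsplit, Nat.cast_add]
  refine add_le_pairedProb_mul hN hK (κ := #(D v)) (c := #{x ∈ D v | w ∈ x})
    (T := #{γ ∈ pairingConfigs V K | P γ ∧ v ∈ γ w})
    (by exact_mod_cast (powersetCard_nonempty.2 (by rw [card_univ_erase]; omega)).card_pos)
    (by rw [← hcast]; exact_mod_cast hc) (by rw [← hcast]; exact_mod_cast hT)
    (by exact_mod_cast hTM) (by exact_mod_cast hA) ?_
  rw [show (#(D v) : ℝ) - #{x ∈ D v | w ∈ x} = #{x ∈ D v | w ∉ x} by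
    rw [← hcompl, Nat.cast_add, add_sub_cancel_left]]
  exact_mod_cast hB

/-- Peeling off leaves one at a time, each edge of a forest embedded in `V` costs a factor
`λ`. -/
theorem card_filter_forall_paired_le (hK : K < Fintype.card V) {α : Type*} {c : α → V}
    (hc : Injective c) (f : α → α) (S : Finset α) (hS : ∀ u ∈ S, ∃ k, f^[k] u ∉ S) :
    (#{γ ∈ pairingConfigs V K | ∀ u ∈ S, Paired γ (c u) (c (f u))} : ℝ)
      ≤ pairedProb (Fintype.card V) K ^ #S * #(pairingConfigs V K) := by
  induction S using Finset.strongInduction with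
  | H S ih =>
  rcases S.eq_empty_or_nonempty with rfl | hne
  · simp
  obtain ⟨v, hv, hleaf⟩ := exists_forall_apply_ne_of_forall_exists_iterate_notMem hne hS
  have hS' : ∀ u ∈ S.erase v, ∃ k, f^[k] u ∉ S.erase v := fun u hu =>
    (hS u (mem_of_mem_erase hu)).imp fun _ hk hk' => hk (mem_of_mem_erase hk')
  have hfilter : {γ ∈ pairingConfigs V K | ∀ u ∈ S, Paired γ (c u) (c (f u))}
      = {γ ∈ pairingConfigs V K | (∀ u ∈ S.erase v, Paired γ (c u) (c (f u)))
          ∧ Paired γ (c v) (c (f v))} := by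
    refine filter_congr fun γ _ => ?_
    rw [← insert_erase hv, forall_mem_insert, erase_insert_eq_erase, erase_idem, and_comm]
  rw [hfilter]
  set lam := pairedProb (Fintype.card V) K
  calc _ ≤ lam * #{γ ∈ pairingConfigs V K | ∀ u ∈ S.erase v, Paired γ (c u) (c (f u))} :=
        card_filter_and_paired_le hK (P := fun γ => ∀ u ∈ S.erase v, Paired γ (c u) (c (f u)))
          (fun γ γ' h hP u hu => (hP u hu).mono h)
          (hc.ne (hleaf v hv).symm) fun γ γ' h => forall₂_congr fun u hu =>
            paired_iff_of_erase_eq h (hc.ne (ne_of_mem_erase hu))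
              (hc.ne (hleaf u (mem_of_mem_erase hu)))
    _ ≤ lam * (lam ^ #(S.erase v) * #(pairingConfigs V K)) :=
        mul_le_mul_of_nonneg_left (ih _ (erase_ssubset hv) hS') (pairedProb_nonneg hK)
    _ = lam ^ #S * #(pairingConfigs V K) := by
        rw [card_erase_of_mem hv, ← mul_assoc, ← pow_succ', Nat.sub_add_cancel (card_pos.2 hne)]

end Pairing

theorem sum_bernoulli_mul_prod_ite {ε : Type*} [Fintype ε] [DecidableEq ε] (p : ℝ)
    (E : Finset ε) :
    ∑ β : ε → Bool, (∏ e, if β e then p else 1 - p) * ∏ e ∈ E, (if β e then 1 else 0)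
      = p ^ #E := by
  simp_rw [← Fintype.prod_ite_mem E, ← prod_mul_distrib]
  rw [← Fintype.prod_sum fun e (b : Bool) =>
    (if b then p else 1 - p) * if e ∈ E then (if b then 1 else 0) else 1]
  simp only [Fintype.sum_bool]
  rw [← prod_const, ← Fintype.prod_ite_mem E fun _ => p]
  exact prod_congr rfl fun e _ => by by_cases he : e ∈ E <;> simp [he]

theorem prod_bernoulli_nonneg {ε : Type*} [Fintype ε] {p : ℝ} (hp0 : 0 ≤ p) (hp1 : p ≤ 1)
    (β : ε → Bool) : 0 ≤ ∏ e, if β e then p else 1 - p :=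
  prod_nonneg fun e _ => by split_ifs <;> linarith

theorem SimpleGraph.Connected.exists_adj_dist_lt {α : Type*} {G : SimpleGraph α}
    (hG : G.Connected) {v root : α} (hv : v ≠ root) :
    ∃ u, G.Adj v u ∧ G.dist u root < G.dist v root := by
  obtain ⟨p, hp⟩ := hG.exists_walk_length_eq_dist v root
  cases p with
  | nil => exact absurd rfl hv
  | cons hadj q =>
    refine ⟨_, hadj, ?_⟩
    rw [SimpleGraph.Walk.length_cons] at hp
    have := SimpleGraph.dist_le q
    omega

section TreeParentMaps

variable {α : Type*} [Fintype α] [LinearOrder α] (root : α)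

/-- Spanning trees of `α` rooted at `root`, encoded by the map sending each vertex to its
parent (and `root` to itself). -/
noncomputable def treeParentMaps : Finset (α → α) :=
  {f | f root = root ∧ ∀ v, ∃ k, f^[k] v = root}

namespace Prufer

variable (f : α → α)

noncomputable def leaves (R : Finset α) : Finset α :=
  {v ∈ Rᶜ | ∀ u ∈ Rᶜ, f u ≠ v}

noncomputable def nextLeaf (R : Finset α) : α :=
  if h : (leaves f R).Nonempty then (leaves f R).min' h else root

/-- The vertices removed after `i` steps of repeatedly deleting the least leaf; `root` counts as
removed from the start so that it is never chosen. -/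
noncomputable def removed : ℕ → Finset α
  | 0 => {root}
  | i + 1 => insert (nextLeaf root f (removed i)) (removed i)

noncomputable def code (j : Fin (Fintype.card α - 2)) : α :=
  f (nextLeaf root f (removed root f j))

variable {root f}

theorem nextLeaf_mem_leaves {R : Finset α} (hR : (leaves f R).Nonempty) :
    nextLeaf root f R ∈ leaves f R := by
  rw [nextLeaf, dif_pos hR]; exact min'_mem _ _

theorem leaves_nonempty (hreach : ∀ v, ∃ k, f^[k] v = root) {R : Finset α} (hroot : root ∈ R)
    (hR : Rᶜ.Nonempty) : (leaves f R).Nonempty := by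
  obtain ⟨v, hv, hleaf⟩ := exists_forall_apply_ne_of_forall_exists_iterate_notMem hR
    (f := f) fun u _ => (hreach u).imp fun _ hk => by rw [mem_compl, not_not, hk]; exact hroot
  exact ⟨v, mem_filter.2 ⟨hv, hleaf⟩⟩

theorem root_mem_removed (i : ℕ) : root ∈ removed root f i := by
  induction i with
  | zero => exact mem_singleton_self root
  | succ i ih => exact mem_insert_of_mem ih

theorem removed_mono : Monotone (removed root f) :=
  monotone_nat_of_le_succ fun _ => subset_insert _ _

theorem card_removed (hreach : ∀ v, ∃ k, f^[k] v = root) {i : ℕ}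
    (hi : i + 1 ≤ Fintype.card α) : #(removed root f i) = i + 1 := by
  induction i with
  | zero => rfl
  | succ i ih =>
    have hcard := ih (by omega)
    have hnonempty : (removed root f i)ᶜ.Nonempty := by
      rw [← card_pos, card_compl]; omega
    have hleaf := nextLeaf_mem_leaves (root := root)
      (leaves_nonempty hreach (root_mem_removed i) hnonempty)
    rw [removed, card_insert_of_notMem (mem_compl.1 (mem_filter.1 hleaf).1), hcard]

theorem apply_eq_root_of_notMem_removed {i : ℕ} {u : α} (hu : u ∉ removed root f i)
    (hfu : f u ∈ removed root f i) : f u = root := by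
  induction i with
  | zero => exact mem_singleton.1 hfu
  | succ i ih =>
    rw [removed, mem_insert, not_or] at hu
    rcases mem_insert.1 hfu with hfu | hfu
    · by_cases hR : (leaves f (removed root f i)).Nonempty
      · exact absurd hfu ((mem_filter.1 (nextLeaf_mem_leaves hR)).2 u (mem_compl.2 hu.2))
      · rwa [nextLeaf, dif_neg hR] at hfu
    · exact ih hu.2 hfu

/-- After `card α - 2` steps a single vertex besides `root` is left, and its parent is `root`. -/
theorem apply_eq_root_of_notMem_removed_last (hreach : ∀ v, ∃ k, f^[k] v = root) {v : α}
    (hv : v ∉ removed root f (Fintype.card α - 2)) : f v = root := by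
  by_contra hfv
  have hvr : v ≠ root := fun h => hv (h ▸ root_mem_removed _)
  have hfvR : f v ∉ removed root f (Fintype.card α - 2) := fun h =>
    hfv (apply_eq_root_of_notMem_removed hv h)
  have hpair : {v, f v} ⊆ (removed root f (Fintype.card α - 2))ᶜ := by
    simp [insert_subset_iff, hv, hfvR]
  have hcard := card_le_card hpair
  rw [card_pair (apply_ne_self_of_iterate_eq hreach hvr).symm, card_compl,
    card_removed hreach (by have := Fintype.card_pos_iff.2 ⟨root⟩; omega)] at hcard
  omega

theorem exists_eq_nextLeaf_of_mem_removed {k : ℕ} {v : α} (hv : v ∈ removed root f k)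
    (hvr : v ≠ root) :
    ∃ j < k, v ∉ removed root f j ∧ v = nextLeaf root f (removed root f j) := by
  induction k with
  | zero => exact absurd (mem_singleton.1 hv) hvr
  | succ k ih =>
    by_cases hvk : v ∈ removed root f k
    · obtain ⟨j, hj, hvj⟩ := ih hvk
      exact ⟨j, by omega, hvj⟩
    · exact ⟨k, by omega, hvk, (mem_insert.1 hv).resolve_right hvk⟩

/-- The leaves at step `i` are the remaining vertices that do not occur in the rest of the
code, so they can be read off from the removed set and the code. -/
theorem leaves_removed (hreach : ∀ v, ∃ k, f^[k] v = root) (i : ℕ) :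
    leaves f (removed root f i) = {v ∈ (removed root f i)ᶜ | ∀ j, i ≤ j →
      j < Fintype.card α - 2 → f (nextLeaf root f (removed root f j)) ≠ v} := by
  refine filter_congr fun v hv => ⟨fun hleaf j hij hj => ?_, fun hcode u hu hfu => ?_⟩
  · have hnonempty : (removed root f j)ᶜ.Nonempty := by
      rw [← card_pos, card_compl, card_removed hreach (by omega)]; omega
    have hj := nextLeaf_mem_leaves (root := root) (leaves_nonempty hreach (root_mem_removed j)
      hnonempty)
    exact hleaf _ (compl_subset_compl.2 (removed_mono hij) (mem_filter.1 hj).1)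
  · have hur : u ≠ root := fun h => mem_compl.1 hu (h ▸ root_mem_removed i)
    by_cases hulast : u ∈ removed root f (Fintype.card α - 2)
    · obtain ⟨j, hj, huj, rfl⟩ := exists_eq_nextLeaf_of_mem_removed hulast hur
      have hij : i ≤ j := by
        by_contra! hji
        exact mem_compl.1 hu (removed_mono hji (mem_insert_self _ _))
      exact hcode j hij hj hfu
    · rw [apply_eq_root_of_notMem_removed_last hreach hulast] at hfu
      exact mem_compl.1 hv (hfu ▸ root_mem_removed i)

end Prufer

open Prufer in
theorem code_injOn_treeParentMaps : Set.InjOn (code root) (treeParentMaps root) := by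
  intro f hf f' hf' hcode
  simp only [treeParentMaps, coe_filter, mem_univ, true_and, Set.mem_ofPred_eq] at hf hf'
  have hcode' : ∀ j < Fintype.card α - 2, f (nextLeaf root f (removed root f j))
      = f' (nextLeaf root f' (removed root f' j)) := fun j hj => congrFun hcode ⟨j, hj⟩
  have hnext : ∀ i, removed root f i = removed root f' i →
      nextLeaf root f (removed root f i) = nextLeaf root f' (removed root f' i) := by
    intro i hi
    have hleaves : leaves f (removed root f i) = leaves f' (removed root f' i) := by
      rw [leaves_removed hf.2, leaves_removed hf'.2, hi]
      refine filter_congr fun v _ => forall₂_congr fun j _ => ?_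
      exact imp_congr_right fun hj => by rw [hcode' j hj]
    rw [nextLeaf, nextLeaf, hleaves]
  have hremoved : ∀ i, removed root f i = removed root f' i := by
    intro i
    induction i with
    | zero => rfl
    | succ i ih => rw [removed, removed, hnext i ih, ih]
  funext v
  by_cases hvr : v = root
  · rw [hvr, hf.1, hf'.1]
  by_cases hv : v ∈ removed root f (Fintype.card α - 2)
  · obtain ⟨j, hj, -, rfl⟩ := exists_eq_nextLeaf_of_mem_removed hv hvr
    rw [hcode' j hj, hnext j (hremoved j)]
  · rw [apply_eq_root_of_notMem_removed_last hf.2 hv,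
      apply_eq_root_of_notMem_removed_last hf'.2 (hremoved _ ▸ hv)]

/-- Cayley's bound, via the injectivity of the Prüfer code. -/
theorem card_treeParentMaps_le :
    #(treeParentMaps root) ≤ Fintype.card α ^ (Fintype.card α - 2) := by
  simpa using card_le_card_of_injOn (t := univ) _ (fun _ _ => mem_coe.2 (mem_univ _))
    (code_injOn_treeParentMaps (root := root))

variable {root}

/-- A shortest-path tree towards `root`. -/
theorem exists_mem_treeParentMaps_of_connected {G : SimpleGraph α} (hG : G.Connected) :
    ∃ f ∈ treeParentMaps root, ∀ v ∈ univ.erase root, G.Adj v (f v) := by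
  choose g hgadj hgdist using fun v (hv : v ≠ root) => hG.exists_adj_dist_lt hv
  let f v := if hv : v = root then root else g v hv
  have hreach : ∀ d v, G.dist v root = d → ∃ k, f^[k] v = root := by
    intro d
    induction d using Nat.strong_induction_on with
    | _ d ih =>
      intro v hd
      by_cases hv : v = root
      · exact ⟨0, hv⟩
      obtain ⟨k, hk⟩ := ih _ (hd ▸ hgdist v hv) (g v hv) rfl
      exact ⟨k + 1, by simpa [f, hv] using hk⟩
  refine ⟨f, ?_, fun v hv => ?_⟩
  · simp only [treeParentMaps, mem_filter, mem_univ, true_and]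
    exact ⟨by simp [f], fun v => hreach _ v rfl⟩
  · have hv := ne_of_mem_erase hv
    simpa [f, hv] using hgadj v hv

theorem injOn_edge_of_mem_treeParentMaps {f : α → α} (hf : f ∈ treeParentMaps root) :
    Set.InjOn (fun v => s(v, f v)) (univ.erase root : Finset α) := by
  intro v hv u hu h
  simp only [treeParentMaps, mem_filter, mem_univ, true_and] at hf
  rcases Sym2.eq_iff.1 h with ⟨hvu, -⟩ | ⟨hvu, hfv⟩
  · exact hvu
  -- otherwise `f` swaps `v` and `u`, so the orbit of `v` misses `root`
  have hcycle : ∀ k, f^[k] v = v ∨ f^[k] v = u := by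
    intro k
    induction k with
    | zero => exact Or.inl rfl
    | succ k ih =>
      rw [iterate_succ_apply']
      rcases ih with h | h <;> rw [h]
      · exact Or.inr hfv
      · exact Or.inl hvu.symm
  obtain ⟨k, hk⟩ := hf.2 v
  rcases hcycle k with h | h <;> rw [h] at hk
  · exact absurd hk (ne_of_mem_erase (mem_coe.1 hv))
  · exact absurd hk (ne_of_mem_erase (mem_coe.1 hu))

/-- The union bound over spanning trees: a connected graph whose edges satisfy `R` contains a
spanning tree whose edges satisfy `R`. -/
theorem one_le_sum_treeParentMaps_of_connected {G : SimpleGraph α} (hG : G.Connected)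
    {R : α → α → Prop} (hR : ∀ a b, G.Adj a b → R a b) :
    1 ≤ ∑ f ∈ treeParentMaps root, ∏ v ∈ univ.erase root, (if R v (f v) then (1 : ℝ) else 0) := by
  obtain ⟨f, hf, hadj⟩ := exists_mem_treeParentMaps_of_connected (root := root) hG
  calc (1 : ℝ) = ∏ v ∈ univ.erase root, (if R v (f v) then (1 : ℝ) else 0) :=
        (prod_eq_one fun v hv => if_pos (hR _ _ (hadj v hv))).symm
    _ ≤ _ := single_le_sum (f := fun f => ∏ v ∈ univ.erase root, (if R v (f v) then (1 : ℝ) else 0))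
        (fun _ _ => prod_nonneg fun _ _ => by positivity) hf

/-- Integrating out the Erdős–Rényi edges of a fixed spanning tree gives `p ^ (card α - 1)`,
and the pairings of its `card α - 1` edges cost `λ` each. -/
theorem sum_bernoulli_mul_prod_ite_adjHG_le {n K : ℕ} (hK : K < n) {p : ℝ} (hp : 0 ≤ p)
    {c : α → Fin n} (hc : Injective c) {f : α → α} (hf : f ∈ treeParentMaps root) :
    ∑ γ ∈ pairingConfigs (Fin n) K, ∑ β : Sym2 (Fin n) → Bool, (∏ e, if β e then p else 1 - p)
        * ∏ v ∈ univ.erase root, (if adjHG n γ β (c v) (c (f v)) then 1 else 0)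
      ≤ (p * pairedProb n K) ^ (Fintype.card α - 1) * #(pairingConfigs (Fin n) K) := by
  set S : Finset α := univ.erase root
  set E := S.image fun v => s(c v, c (f v))
  have hinj : Set.InjOn (fun v => s(c v, c (f v))) S := fun v hv u hu h =>
    injOn_edge_of_mem_treeParentMaps hf hv hu (Sym2.map.injective hc (by simpa using h))
  have hE : #E = Fintype.card α - 1 := by
    rw [card_image_of_injOn hinj, card_erase_of_mem (mem_univ _), card_univ]
  have hsplit : ∀ γ β, ∏ v ∈ S, (if adjHG n γ β (c v) (c (f v)) then (1 : ℝ) else 0)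
      = (∏ v ∈ S, if Paired γ (c v) (c (f v)) then 1 else 0)
        * ∏ e ∈ E, if β e then 1 else 0 := by
    intro γ β
    rw [prod_image hinj, ← prod_mul_distrib]
    exact prod_congr rfl fun v _ => by
      rw [ite_zero_mul_ite_zero, one_mul]; exact if_congr Iff.rfl rfl rfl
  have hβ : ∀ γ, ∑ β : Sym2 (Fin n) → Bool, (∏ e, if β e then p else 1 - p)
      * ∏ v ∈ S, (if adjHG n γ β (c v) (c (f v)) then 1 else 0)
      = (∏ v ∈ S, if Paired γ (c v) (c (f v)) then 1 else 0) * p ^ (Fintype.card α - 1) := by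
    intro γ
    rw [← hE, ← sum_bernoulli_mul_prod_ite p E, mul_sum]
    exact sum_congr rfl fun β _ => by rw [hsplit]; ring
  rw [sum_congr rfl fun γ _ => hβ γ, ← sum_mul]
  have hforest := card_filter_forall_paired_le (by rwa [Fintype.card_fin]) hc f S
    fun u _ => ((mem_filter.1 hf).2.2 u).imp fun _ hk => by simp [S, hk]
  rw [natCast_card_filter, Fintype.card_fin, card_erase_of_mem (mem_univ _), card_univ] at hforest
  rw [mul_pow, mul_comm, mul_assoc]
  refine mul_le_mul_of_nonneg_left (le_of_eq_of_le ?_ hforest) (pow_nonneg hp _)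
  exact sum_congr rfl fun γ _ => prod_boole

end TreeParentMaps

theorem validGammas_eq_pairingConfigs (n K : ℕ) : validGammas n K = pairingConfigs (Fin n) K := by
  ext γ
  simp [validGammas, pairingConfigs, Fintype.mem_piFinset]

theorem adjHG_comm {n : ℕ} {γ : Fin n → Finset (Fin n)} {β : Sym2 (Fin n) → Bool}
    {i j : Fin n} : adjHG n γ β i j ↔ adjHG n γ β j i := by
  rw [adjHG, adjHG, or_comm, Sym2.eq_swap]

theorem restricted_connected_prob_bound_general (n r K : ℕ) (p : ℝ)
    (hr2 : 2 ≤ r) (hrn : r ≤ n) (hKn : K < n)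
    (hp : p ∈ Set.Ioo (0:ℝ) 1) :
    probHG n K p (fun γ β =>
        (SimpleGraph.fromRel (fun i j : Fin r =>
          adjHG n γ β (Fin.castLE hrn i) (Fin.castLE hrn j))).Connected)
      ≤ (r : ℝ) ^ (r - 2)
        * (p * (2 * (K : ℝ) / ((n : ℝ) - 1) - ((K : ℝ) / ((n : ℝ) - 1)) ^ 2)) ^ (r - 1) := by
  have : NeZero r := ⟨by omega⟩
  set Γ := pairingConfigs (Fin n) K
  set T := treeParentMaps (0 : Fin r)
  set c := Fin.castLE hrn
  have hΓ : (0 : ℝ) < #Γ := by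
    exact_mod_cast card_pairingConfigs_pos (by rwa [Fintype.card_fin])
  rw [probHG, validGammas_eq_pairingConfigs, div_le_iff₀ hΓ]
  calc _ ≤ ∑ γ ∈ Γ, ∑ β : Sym2 (Fin n) → Bool, (∏ e, if β e then p else 1 - p)
          * ∑ f ∈ T, ∏ v ∈ univ.erase 0, (if adjHG n γ β (c v) (c (f v)) then 1 else 0) := by
        refine sum_le_sum fun γ _ => sum_le_sum fun β _ =>
          mul_le_mul_of_nonneg_left ?_ (prod_bernoulli_nonneg hp.1.le hp.2.le β)
        split_ifs with hconn
        · exact one_le_sum_treeParentMaps_of_connected hconn fun a b hab =>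
            hab.2.elim id adjHG_comm.1
        · exact sum_nonneg fun _ _ => prod_nonneg fun _ _ => by positivity
    _ = ∑ f ∈ T, ∑ γ ∈ Γ, ∑ β : Sym2 (Fin n) → Bool, (∏ e, if β e then p else 1 - p)
          * ∏ v ∈ univ.erase 0, (if adjHG n γ β (c v) (c (f v)) then 1 else 0) := by
        simp_rw [mul_sum]
        exact (sum_congr rfl fun γ _ => sum_comm).trans sum_comm
    _ ≤ ∑ _f ∈ T, (p * pairedProb n K) ^ (r - 1) * #Γ := sum_le_sum fun f hf => by
        simpa using sum_bernoulli_mul_prod_ite_adjHG_le hKn hp.1.le (Fin.castLE_injective hrn) hf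
    _ ≤ (r : ℝ) ^ (r - 2) * ((p * pairedProb n K) ^ (r - 1) * #Γ) := by
        rw [sum_const, nsmul_eq_mul]
        have := pairedProb_nonneg hKn
        have hT : (#T : ℝ) ≤ (r : ℝ) ^ (r - 2) := by
          simpa using (Nat.cast_le (α := ℝ)).2 (card_treeParentMaps_le (root := (0 : Fin r)))
        exact mul_le_mul_of_nonneg_right hT (by have := hp.1; positivity)
    _ = _ := by rw [pairedProb]; ring

theorem restricted_connected_prob_bound (n r K : ℕ) (p : ℝ) (hn : 2 ≤ n)
    (hr2 : 2 ≤ r) (hrn : r ≤ n) (hK1 : 1 ≤ K) (hKn : K < n)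
    (hp : p ∈ Set.Ioo (0:ℝ) 1) :
    probHG n K p (fun γ β =>
        (SimpleGraph.fromRel (fun i j : Fin r =>
          adjHG n γ β (Fin.castLE hrn i) (Fin.castLE hrn j))).Connected)
      ≤ (r : ℝ) ^ (r - 2)
        * (p * (2 * (K : ℝ) / ((n : ℝ) - 1) - ((K : ℝ) / ((n : ℝ) - 1)) ^ 2)) ^ (r - 1) :=
  restricted_connected_prob_bound_general n r K p hr2 hrn hKn hp
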